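/- Let ρ be a density matrix on ℂ^(2^L), let ψ ∈ ℂ^(2^L) ⊗ ℂ^(2^M) and φ ∈ ℂ^(2^L) ⊗ ℂ^(2^K) be purifications of ρ (unit vectors whose partial trace over the second factor equals ρ), each an eigenvector of the respective total parity operator P_L ⊗ P_M, resp. P_L ⊗ P_K. Then there exists a finite family {V_j} of 2^K × 2^M complex matrices with Σ_j V_jᴴ V_j = I_(2^M), each parity-homogeneous (for each j, P_K V_j = V_j P_M or P_K V_j = −V_j P_M), such that Σ_j (I_(2^L) ⊗ V_j) |ψ⟩⟨ψ| (I_(2^L) ⊗ V_j)ᴴ = |φ⟩⟨φ|. That is, any two definite-parity purifications of ρ are connected by a parity-respecting quantum channel on the purifying system. -/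

import Mathlib

/-!
Write the purifications as matrices, `ψ = vec X` and `φ = vec Y`; equal reduced states mean
`Xᴴ X = Yᴴ Y =: G`. With `G⁺` the Moore–Penrose inverse, `W = Y G⁺ Xᴴ` satisfies `W X = Y`, and
`Wᴴ W = X G⁺ Xᴴ` is the projection onto the range of `X`. The rank-one maps
`e₀ e_sᵀ (1 - X G⁺ Xᴴ)` complete `W` to a channel and annihilate `X`.

Definite parity of `ψ` and `φ` says that `X` and `Y` intertwine the parity operators up to sign.
Hence `G`, `G⁺` and the range projection commute with the parities, and every Kraus operator is
parity-homogeneous, the all-zero string `e₀` being even.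
-/

open Matrix
open scoped Kronecker ComplexOrder

noncomputable section

/-- Bit strings of length `L`. -/
abbrev BitStr (L : ℕ) := Fin L → Fin 2

/-- The parity operator `P_L = Z^{⊗L}` on `ℂ^(2^L)`: the diagonal matrix with entries
`(−1)^(s₁+⋯+s_L)`. -/
def parityOp (L : ℕ) : Matrix (BitStr L) (BitStr L) ℂ :=
  Matrix.diagonal fun s => (-1 : ℂ) ^ (∑ i, (s i : ℕ))

/-- Partial trace over the second tensor factor. -/
def ptrace2 {α β : Type*} [Fintype β] (M : Matrix (α × β) (α × β) ℂ) : Matrix α α ℂ :=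
  Matrix.of fun i i' => ∑ j, M (i, j) (i', j)

namespace Matrix

section Pinv

variable {n : Type*} [Fintype n] [DecidableEq n]

/-- The Moore–Penrose inverse of a Hermitian matrix: nonzero eigenvalues are inverted and the
kernel is kept, since `(0 : ℝ)⁻¹ = 0`. -/
def pinv (G : Matrix n n ℂ) : Matrix n n ℂ := cfc (fun x : ℝ => x⁻¹) G

lemma isHermitian_pinv (G : Matrix n n ℂ) : (pinv G).IsHermitian := cfc_predicate _ _

lemma commute_pinv_of_commute {G P : Matrix n n ℂ} (h : Commute G P) : Commute (pinv G) P :=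
  h.cfc_real _

lemma mul_pinv_mul_self {G : Matrix n n ℂ} (hG : G.IsHermitian) : G * pinv G * G = G := by
  have hc := fun f : ℝ → ℝ => (spectrum ℝ G).toFinite.continuousOn f
  calc G * pinv G * G = cfc (fun x : ℝ => x * x⁻¹ * x) G := by
        rw [pinv, cfc_mul _ _ G (hc _) (hc _), cfc_mul _ _ G (hc _) (hc _), cfc_id' ℝ G]
    _ = G := by simp only [mul_inv_mul_cancel, cfc_id' ℝ G]

lemma pinv_mul_self_mul_pinv {G : Matrix n n ℂ} (hG : G.IsHermitian) :
    pinv G * G * pinv G = pinv G := by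
  have hc := fun f : ℝ → ℝ => (spectrum ℝ G).toFinite.continuousOn f
  calc pinv G * G * pinv G = cfc (fun x : ℝ => x⁻¹ * x * x⁻¹) G := by
        rw [pinv, cfc_mul _ _ G (hc _) (hc _), cfc_mul _ _ G (hc _) (hc _), cfc_id' ℝ G]
    _ = pinv G := by
        rw [pinv]
        congr 1
        funext x
        simpa only [inv_inv] using mul_inv_mul_cancel x⁻¹

lemma mul_pinv_conjTranspose_mul_self {k : Type*} [Fintype k] (Y : Matrix k n ℂ) :
    Y * (pinv (Yᴴ * Y) * (Yᴴ * Y)) = Y := by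
  have h : (Yᴴ * Y) * (pinv (Yᴴ * Y) * (Yᴴ * Y) - 1) = 0 := by
    rw [Matrix.mul_sub, ← Matrix.mul_assoc,
      mul_pinv_mul_self (isHermitian_conjTranspose_mul_self Y), Matrix.mul_one, sub_self]
  rwa [conjTranspose_mul_self_mul_eq_zero, Matrix.mul_sub, Matrix.mul_one, sub_eq_zero] at h

end Pinv

variable {l m n : Type*} [Fintype m] [Fintype n] [DecidableEq n]

def rangeProj (X : Matrix m n ℂ) : Matrix m m ℂ := X * pinv (Xᴴ * X) * Xᴴ

lemma isStarProjection_rangeProj (X : Matrix m n ℂ) : IsStarProjection (rangeProj X) where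
  isIdempotentElem := by
    rw [IsIdempotentElem, rangeProj]
    calc X * pinv (Xᴴ * X) * Xᴴ * (X * pinv (Xᴴ * X) * Xᴴ)
        = X * (pinv (Xᴴ * X) * (Xᴴ * X) * pinv (Xᴴ * X)) * Xᴴ := by
          simp only [Matrix.mul_assoc]
      _ = X * pinv (Xᴴ * X) * Xᴴ := by
          rw [pinv_mul_self_mul_pinv (isHermitian_conjTranspose_mul_self X)]
  isSelfAdjoint := by
    rw [IsSelfAdjoint, star_eq_conjTranspose, rangeProj, conjTranspose_mul, conjTranspose_mul,
      conjTranspose_conjTranspose, (isHermitian_pinv _).eq, Matrix.mul_assoc]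

lemma rangeProj_mul_self (X : Matrix m n ℂ) : rangeProj X * X = X := by
  simp only [rangeProj, Matrix.mul_assoc]
  exact mul_pinv_conjTranspose_mul_self X

def connectingMap (X : Matrix m n ℂ) (Y : Matrix l n ℂ) : Matrix l m ℂ :=
  Y * pinv (Xᴴ * X) * Xᴴ

def krausFamily [DecidableEq l] [DecidableEq m] (X : Matrix m n ℂ) (Y : Matrix l n ℂ)
    (k₀ : l) : Option m → Matrix l m ℂ
  | none => connectingMap X Y
  | some s => single k₀ s (1 : ℂ) * (1 - rangeProj X)

variable {X : Matrix m n ℂ} {Y : Matrix l n ℂ}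

lemma krausFamily_some_mul [DecidableEq l] [DecidableEq m] (k₀ : l) (s : m) :
    krausFamily X Y k₀ (some s) * X = 0 := by
  rw [krausFamily, Matrix.mul_assoc, Matrix.sub_mul, Matrix.one_mul, rangeProj_mul_self,
    sub_self, Matrix.mul_zero]

variable [Fintype l]

lemma connectingMap_mul (h : Xᴴ * X = Yᴴ * Y) : connectingMap X Y * X = Y := by
  rw [connectingMap, Matrix.mul_assoc, Matrix.mul_assoc, h, mul_pinv_conjTranspose_mul_self]

lemma conjTranspose_connectingMap_mul_self (h : Xᴴ * X = Yᴴ * Y) :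
    (connectingMap X Y)ᴴ * connectingMap X Y = rangeProj X := by
  calc (connectingMap X Y)ᴴ * connectingMap X Y
      = X * (pinv (Xᴴ * X))ᴴ * (Yᴴ * Y) * pinv (Xᴴ * X) * Xᴴ := by
        simp only [connectingMap, conjTranspose_mul, conjTranspose_conjTranspose,
          Matrix.mul_assoc]
    _ = X * (pinv (Xᴴ * X) * (Xᴴ * X) * pinv (Xᴴ * X)) * Xᴴ := by
        rw [← h, (isHermitian_pinv _).eq]
        simp only [Matrix.mul_assoc]
    _ = rangeProj X := by
        rw [pinv_mul_self_mul_pinv (isHermitian_conjTranspose_mul_self X), rangeProj]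

variable [DecidableEq l] [DecidableEq m]

lemma sum_conjTranspose_mul_krausFamily (h : Xᴴ * X = Yᴴ * Y) (k₀ : l) :
    ∑ o, (krausFamily X Y k₀ o)ᴴ * krausFamily X Y k₀ o = 1 := by
  have hR := (isStarProjection_rangeProj X).one_sub
  have hterm (s : m) : (krausFamily X Y k₀ (some s))ᴴ * krausFamily X Y k₀ (some s) =
      (1 - rangeProj X)ᴴ * single s s 1 * (1 - rangeProj X) := by
    rw [krausFamily, conjTranspose_mul, conjTranspose_single, star_one, Matrix.mul_assoc,
      ← Matrix.mul_assoc (single s k₀ 1), single_mul_single_same, mul_one, Matrix.mul_assoc]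
  have hcompl : ∑ s, (krausFamily X Y k₀ (some s))ᴴ * krausFamily X Y k₀ (some s) =
      1 - rangeProj X := by
    rw [Finset.sum_congr rfl fun s _ => hterm s, ← Finset.sum_mul, ← Finset.mul_sum,
      sum_single_one, Matrix.mul_one, ← star_eq_conjTranspose, hR.isSelfAdjoint.star_eq,
      hR.isIdempotentElem.eq]
  rw [Fintype.sum_option, hcompl, krausFamily, conjTranspose_connectingMap_mul_self h,
    add_sub_cancel]

lemma krausFamily_none_mul (h : Xᴴ * X = Yᴴ * Y) (k₀ : l) :
    krausFamily X Y k₀ none * X = Y :=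
  connectingMap_mul h

lemma sum_kronecker_krausFamily_conj_vecMulVec (h : Xᴴ * X = Yᴴ * Y) (k₀ : l) :
    ∑ o, ((1 : Matrix n n ℂ) ⊗ₖ krausFamily X Y k₀ o) * vecMulVec (vec X) (star (vec X)) *
        ((1 : Matrix n n ℂ) ⊗ₖ krausFamily X Y k₀ o)ᴴ = vecMulVec (vec Y) (star (vec Y)) := by
  simp only [mul_vecMulVec, vecMulVec_mul, ← star_mulVec, ← vec_mul_eq_mulVec,
    Fintype.sum_option, krausFamily_none_mul h, krausFamily_some_mul, vec_zero, star_zero,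
    vecMulVec_zero, Finset.sum_const_zero, add_zero]

end Matrix

section Grading

variable {k l m : Type*} [Fintype k] [Fintype m]

def IsParityHomogeneous (P : Matrix k k ℂ) (Q : Matrix m m ℂ) (V : Matrix k m ℂ) : Prop :=
  P * V = V * Q ∨ P * V = -(V * Q)

def IsGrading [DecidableEq k] (P : Matrix k k ℂ) : Prop :=
  P.IsHermitian ∧ P * P = 1

variable {P : Matrix k k ℂ} {Q : Matrix m m ℂ}

lemma IsParityHomogeneous.mul [Fintype l] {R : Matrix l l ℂ} {V : Matrix k m ℂ}
    {U : Matrix m l ℂ} (hV : IsParityHomogeneous P Q V) (hU : IsParityHomogeneous Q R U) :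
    IsParityHomogeneous P R (V * U) := by
  rcases hV with hV | hV <;> rcases hU with hU | hU
  · left; rw [← Matrix.mul_assoc, hV, Matrix.mul_assoc, hU, Matrix.mul_assoc]
  · right; rw [← Matrix.mul_assoc, hV, Matrix.mul_assoc, hU, Matrix.mul_neg, Matrix.mul_assoc]
  · right; rw [← Matrix.mul_assoc, hV, Matrix.neg_mul, Matrix.mul_assoc, hU, Matrix.mul_assoc]
  · left
    rw [← Matrix.mul_assoc, hV, Matrix.neg_mul, Matrix.mul_assoc, hU, Matrix.mul_neg, neg_neg,
      Matrix.mul_assoc]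

lemma IsParityHomogeneous.conjTranspose {V : Matrix k m ℂ}
    (hV : IsParityHomogeneous P Q V) (hP : P.IsHermitian) (hQ : Q.IsHermitian) :
    IsParityHomogeneous Q P Vᴴ := by
  rcases hV with h | h <;> have h' := congrArg Matrix.conjTranspose h <;>
    simp only [conjTranspose_neg, conjTranspose_mul, hP.eq, hQ.eq] at h'
  · exact Or.inl h'.symm
  · exact Or.inr (by rw [h', neg_neg])

lemma IsParityHomogeneous.commute_conjTranspose_mul [DecidableEq k] [DecidableEq m]
    {V : Matrix k m ℂ} (hV : IsParityHomogeneous P Q V) (hP : IsGrading P) (hQ : IsGrading Q) :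
    Commute Q (Vᴴ * V) := by
  have hsq : (V * Q)ᴴ * (V * Q) = (P * V)ᴴ * (P * V) := by
    rcases hV with h | h <;> rw [h]
    rw [conjTranspose_neg, Matrix.neg_mul, Matrix.mul_neg, neg_neg]
  have hconj : Q * (Vᴴ * V) * Q = Vᴴ * V := by
    calc Q * (Vᴴ * V) * Q = (V * Q)ᴴ * (V * Q) := by
          rw [conjTranspose_mul, hQ.1.eq]; simp only [Matrix.mul_assoc]
      _ = Vᴴ * (P * P) * V := by
          rw [hsq, conjTranspose_mul, hP.1.eq]; simp only [Matrix.mul_assoc]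
      _ = Vᴴ * V := by rw [hP.2, Matrix.mul_one]
  calc Q * (Vᴴ * V) = Q * (Vᴴ * V) * Q * Q := by
        rw [Matrix.mul_assoc _ Q Q, hQ.2, Matrix.mul_one]
    _ = Vᴴ * V * Q := by rw [hconj]

variable [DecidableEq l] [DecidableEq m] {R : Matrix l l ℂ}

lemma IsParityHomogeneous.connectingMap [Fintype l] {X : Matrix m l ℂ} {Y : Matrix k l ℂ}
    (hR : IsGrading R) (hQ : IsGrading Q) (hX : IsParityHomogeneous Q R X)
    (hY : IsParityHomogeneous P R Y) : IsParityHomogeneous P Q (connectingMap X Y) := by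
  have hgram : Commute R (Xᴴ * X) := hX.commute_conjTranspose_mul hQ hR
  have hpinv : IsParityHomogeneous R R (pinv (Xᴴ * X)) :=
    Or.inl (commute_pinv_of_commute hgram.symm).symm.eq
  exact (hY.mul hpinv).mul (hX.conjTranspose hQ.1 hR.1)

lemma commute_rangeProj [Fintype l] {X : Matrix m l ℂ} (hR : IsGrading R) (hQ : IsGrading Q)
    (hX : IsParityHomogeneous Q R X) : Commute Q (rangeProj X) := by
  simpa only [conjTranspose_connectingMap_mul_self rfl] using
    (hX.connectingMap hR hQ hX).commute_conjTranspose_mul hQ hQ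

lemma IsParityHomogeneous.krausFamily [Fintype l] [DecidableEq k] {X : Matrix m l ℂ}
    {Y : Matrix k l ℂ} {k₀ : k} (hR : IsGrading R) (hQ : IsGrading Q)
    (hX : IsParityHomogeneous Q R X) (hY : IsParityHomogeneous P R Y)
    (hk₀ : ∀ s, IsParityHomogeneous P Q (single k₀ s 1)) :
    ∀ o, IsParityHomogeneous P Q (krausFamily X Y k₀ o)
  | none => hX.connectingMap hR hQ hY
  | some s =>
    (hk₀ s).mul (Or.inl ((Commute.one_right Q).sub_right (commute_rangeProj hR hQ hX)).eq)

end Grading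

lemma isGrading_parityOp (L : ℕ) : IsGrading (parityOp L) := by
  refine ⟨?_, ?_⟩
  · rw [IsHermitian, parityOp, diagonal_conjTranspose]
    exact congrArg diagonal (by funext s; simp)
  · rw [parityOp, diagonal_mul_diagonal, ← diagonal_one]
    exact congrArg diagonal (funext fun s => by rw [← pow_add]; exact Even.neg_one_pow ⟨_, rfl⟩)

lemma parityOp_mul_single {K M : ℕ} (t : BitStr K) (s : BitStr M) (c : ℂ) :
    parityOp K * single t s c = (-1 : ℂ) ^ (∑ i, (t i : ℕ)) • single t s c := by
  ext i j
  by_cases hi : t = i <;> simp [parityOp, diagonal_mul, single_apply, hi]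

lemma single_mul_parityOp {K M : ℕ} (t : BitStr K) (s : BitStr M) (c : ℂ) :
    single t s c * parityOp M = (-1 : ℂ) ^ (∑ i, (s i : ℕ)) • single t s c := by
  ext i j
  by_cases hj : s = j <;> simp [parityOp, mul_diagonal, single_apply, hj, mul_comm]

lemma isParityHomogeneous_parityOp_single {K M : ℕ} (t : BitStr K) (s : BitStr M) (c : ℂ) :
    IsParityHomogeneous (parityOp K) (parityOp M) (single t s c) := by
  rw [IsParityHomogeneous, parityOp_mul_single, single_mul_parityOp]
  rcases neg_one_pow_eq_or ℂ (∑ i, (t i : ℕ)) with ht | ht <;>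
    rcases neg_one_pow_eq_or ℂ (∑ i, (s i : ℕ)) with hs | hs <;> simp [ht, hs]

lemma IsParityHomogeneous.of_kronecker_mulVec_vec {L : ℕ} {m : Type*} [Fintype m]
    {P : Matrix m m ℂ} {X : Matrix m (BitStr L) ℂ}
    (h : (parityOp L ⊗ₖ P) *ᵥ vec X = vec X ∨ (parityOp L ⊗ₖ P) *ᵥ vec X = -vec X) :
    IsParityHomogeneous P (parityOp L) X := by
  have hinv : P * X = P * X * parityOp L * parityOp L := by
    rw [Matrix.mul_assoc _ (parityOp L), (isGrading_parityOp L).2, Matrix.mul_one]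
  rw [kronecker_mulVec_vec, parityOp, diagonal_transpose, ← parityOp, ← vec_neg, vec_inj,
    vec_inj] at h
  rcases h with h | h <;> rw [IsParityHomogeneous, hinv, h]
  · exact Or.inl rfl
  · exact Or.inr (Matrix.neg_mul _ _)

lemma ptrace2_vecMulVec_vec {m n : Type*} [Fintype m] (X : Matrix m n ℂ) :
    ptrace2 (vecMulVec (vec X) (star (vec X))) = (Xᴴ * X)ᵀ := by
  ext i i'
  simp [ptrace2, vecMulVec_apply, vec, mul_apply, mul_comm]

theorem parity_channel_connecting_purifications (L M K : ℕ)
    (ρ : Matrix (BitStr L) (BitStr L) ℂ)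
    (ψ : BitStr L × BitStr M → ℂ) (φ : BitStr L × BitStr K → ℂ)
    (hψρ : ptrace2 (Matrix.vecMulVec ψ (star ψ)) = ρ)
    (hφρ : ptrace2 (Matrix.vecMulVec φ (star φ)) = ρ)
    (hψp : (parityOp L ⊗ₖ parityOp M).mulVec ψ = ψ ∨
           (parityOp L ⊗ₖ parityOp M).mulVec ψ = -ψ)
    (hφp : (parityOp L ⊗ₖ parityOp K).mulVec φ = φ ∨
           (parityOp L ⊗ₖ parityOp K).mulVec φ = -φ) :
    ∃ (r : ℕ) (V : Fin r → Matrix (BitStr K) (BitStr M) ℂ),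
      (∑ j, (V j)ᴴ * V j = 1) ∧
      (∀ j, parityOp K * V j = V j * parityOp M ∨
            parityOp K * V j = -(V j * parityOp M)) ∧
      ∑ j, ((1 : Matrix (BitStr L) (BitStr L) ℂ) ⊗ₖ V j) * Matrix.vecMulVec ψ (star ψ) *
          ((1 : Matrix (BitStr L) (BitStr L) ℂ) ⊗ₖ V j)ᴴ = Matrix.vecMulVec φ (star φ) := by
  obtain ⟨X, rfl⟩ := vec_bijective.surjective ψ
  obtain ⟨Y, rfl⟩ := vec_bijective.surjective φ
  have hXY : Xᴴ * X = Yᴴ * Y := by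
    rw [← transpose_inj, ← ptrace2_vecMulVec_vec, ← ptrace2_vecMulVec_vec, hψρ, hφρ]
  have hV := IsParityHomogeneous.krausFamily (k₀ := 0) (isGrading_parityOp L)
    (isGrading_parityOp M) (.of_kronecker_mulVec_vec hψp) (.of_kronecker_mulVec_vec hφp)
    fun s => isParityHomogeneous_parityOp_single 0 s 1
  let e := (Fintype.equivFin (Option (BitStr M))).symm
  refine ⟨_, fun j => krausFamily X Y 0 (e j), ?_, fun j => hV (e j), ?_⟩
  · exact (e.sum_comp _).trans (sum_conjTranspose_mul_krausFamily hXY 0)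
  · exact (e.sum_comp _).trans (sum_kronecker_krausFamily_conj_vecMulVec hXY 0)
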